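/- Let n, r, s be positive integers with s dividing r·n and put m = r·n/s, and let q be a real number with q > 1. Then ∑_{j=0}^{s} ∑_{k=0}^{s} ∑_{t=0}^{s} q^{m·j − m·t + (s−k)(m−n) + (s−k)(s−k−1)/2 + t(t−1)/2} · [s choose k]_q · [k choose j]_q · [j choose t]_q · (−1)^{t+k} = q^{nr} · (−1)^s · (q^{−n}; q)_s. -/
import Mathlib


/-- The q-Pochhammer symbol `(a; q)_k = ∏_{i=0}^{k-1} (1 - a q^i)`. -/
noncomputable def qPoch (q a : ℝ) (k : ℕ) : ℝ :=
  ∏ i ∈ Finset.range k, (1 - a * q ^ i)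

/-- The Gaussian binomial coefficient `[a choose b]_q`, which is
`∏_{i=0}^{b-1} (1 - q^{a-i})/(1 - q^{i+1})` for `b ≤ a` and `0` for `b > a`. -/
noncomputable def qBinom (q : ℝ) (a b : ℕ) : ℝ :=
  if b ≤ a then ∏ i ∈ Finset.range b, (1 - q ^ (a - i)) / (1 - q ^ (i + 1)) else 0

section HELPERS
noncomputable def qq (q : ℝ) (n : ℕ) : ℝ := ∏ i ∈ Finset.range n, (1 - q ^ (i + 1))

lemma one_sub_pow_ne {q : ℝ} (hq : 1 < q) {k : ℕ} (hk : k ≠ 0) : 1 - q ^ k ≠ 0 :=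
  ne_of_lt (by have := one_lt_pow₀ hq hk; linarith)

lemma qq_ne_zero {q : ℝ} (hq : 1 < q) (n : ℕ) : qq q n ≠ 0 :=
  Finset.prod_ne_zero_iff.2 fun i _ => one_sub_pow_ne hq (Nat.succ_ne_zero i)

lemma num_eq {q : ℝ} (hq : 1 < q) {a b : ℕ} (hb : b ≤ a) :
    ∏ i ∈ Finset.range b, (1 - q ^ (a - i)) = qq q a / qq q (a - b) := by
  induction b with
  | zero => simp [div_self (qq_ne_zero hq a)]
  | succ b ih =>
    rw [Finset.prod_range_succ, ih (Nat.le_of_succ_le hb)]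
    have h1 : a - b = (a - (b + 1)) + 1 := by omega
    have h2 : qq q (a - b) = qq q (a - (b + 1)) * (1 - q ^ (a - b)) := by
      rw [h1, qq, Finset.prod_range_succ, ← h1]; rfl
    rw [h2]
    have hne1 : qq q (a - (b+1)) ≠ 0 := qq_ne_zero hq _
    have hne2 : (1 - q ^ (a - b)) ≠ 0 := one_sub_pow_ne hq (by omega)
    field_simp

lemma qBinom_eq_div {q : ℝ} (hq : 1 < q) {a b : ℕ} (hb : b ≤ a) :
    qBinom q a b = qq q a / (qq q b * qq q (a - b)) := by
  rw [qBinom, if_pos hb, Finset.prod_div_distrib, num_eq hq hb]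
  rw [show (∏ i ∈ Finset.range b, (1 - q ^ (i+1))) = qq q b from rfl]
  rw [div_div, mul_comm]

lemma qBinom_of_lt {q : ℝ} {a b : ℕ} (h : a < b) : qBinom q a b = 0 :=
  if_neg (not_le.2 h)

lemma qBinom_zero_right (q : ℝ) (a : ℕ) : qBinom q a 0 = 1 := by
  simp [qBinom]

lemma qBinom_self {q : ℝ} (hq : 1 < q) (a : ℕ) : qBinom q a a = 1 := by
  have h0 : qq q 0 = 1 := by simp [qq]
  rw [qBinom_eq_div hq le_rfl, Nat.sub_self, h0, mul_one, div_self (qq_ne_zero hq a)]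

lemma qBinom_symm {q : ℝ} (hq : 1 < q) {a b : ℕ} (hb : b ≤ a) :
    qBinom q a (a - b) = qBinom q a b := by
  rw [qBinom_eq_div hq (Nat.sub_le a b), qBinom_eq_div hq hb,
    show a - (a - b) = b by omega, mul_comm]

lemma qq_succ (q : ℝ) (n : ℕ) : qq q (n + 1) = qq q n * (1 - q ^ (n + 1)) :=
  Finset.prod_range_succ _ _

lemma pascal1 {q : ℝ} (hq : 1 < q) (a b : ℕ) :
    qBinom q (a + 1) (b + 1) = qBinom q a (b + 1) + q ^ (a - b) * qBinom q a b := by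
  rcases lt_trichotomy b a with h | h | h
  · have hc : a - b = (a - b - 1) + 1 := by omega
    set c := a - b - 1 with hcdef
    rw [qBinom_eq_div hq (by omega : b + 1 ≤ a + 1), qBinom_eq_div hq (by omega : b + 1 ≤ a),
      qBinom_eq_div hq h.le, show a + 1 - (b + 1) = c + 1 by omega,
      show a - (b + 1) = c by omega, show a - b = c + 1 from hc]
    rw [qq_succ, qq_succ q b, qq_succ q c]
    have hpow : q ^ (c + 1) * q ^ (b + 1) = q ^ (a + 1) := by
      rw [← pow_add]; congr 1; omega
    have h1 := qq_ne_zero hq a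
    have h2 := qq_ne_zero hq b
    have h3 := qq_ne_zero hq c
    have h4 : (1 - q ^ (a + 1)) ≠ 0 := one_sub_pow_ne hq (by omega)
    have h5 : (1 - q ^ (b + 1)) ≠ 0 := one_sub_pow_ne hq (by omega)
    have h6 : (1 - q ^ (c + 1)) ≠ 0 := one_sub_pow_ne hq (by omega)
    have key : (1 - q ^ (a + 1)) = (1 - q ^ (c + 1)) + q ^ (c + 1) * (1 - q ^ (b + 1)) := by
      linear_combination hpow
    rw [key]
    field_simp
  · subst h
    rw [qBinom_self hq, qBinom_of_lt (by omega), qBinom_self hq]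
    simp
  · rw [qBinom_of_lt (by omega), qBinom_of_lt (by omega), qBinom_of_lt (by omega)]
    simp

lemma pascal2 {q : ℝ} (hq : 1 < q) (a b : ℕ) :
    qBinom q (a + 1) (b + 1) = q ^ (b + 1) * qBinom q a (b + 1) + qBinom q a b := by
  rcases lt_trichotomy b a with h | h | h
  · have hc : a - b = (a - b - 1) + 1 := by omega
    set c := a - b - 1 with hcdef
    rw [qBinom_eq_div hq (by omega : b + 1 ≤ a + 1), qBinom_eq_div hq (by omega : b + 1 ≤ a),
      qBinom_eq_div hq h.le, show a + 1 - (b + 1) = c + 1 by omega,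
      show a - (b + 1) = c by omega, show a - b = c + 1 from hc]
    rw [qq_succ, qq_succ q b, qq_succ q c]
    have hpow : q ^ (c + 1) * q ^ (b + 1) = q ^ (a + 1) := by
      rw [← pow_add]; congr 1; omega
    have h1 := qq_ne_zero hq a
    have h2 := qq_ne_zero hq b
    have h3 := qq_ne_zero hq c
    have h4 : (1 - q ^ (a + 1)) ≠ 0 := one_sub_pow_ne hq (by omega)
    have h5 : (1 - q ^ (b + 1)) ≠ 0 := one_sub_pow_ne hq (by omega)
    have h6 : (1 - q ^ (c + 1)) ≠ 0 := one_sub_pow_ne hq (by omega)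
    have key : (1 - q ^ (a + 1)) = q ^ (b + 1) * (1 - q ^ (c + 1)) + (1 - q ^ (b + 1)) := by
      linear_combination hpow
    rw [key]
    field_simp
  · subst h
    rw [qBinom_self hq, qBinom_of_lt (by omega), qBinom_self hq]
    simp
  · rw [qBinom_of_lt (by omega), qBinom_of_lt (by omega), qBinom_of_lt (by omega)]
    simp

lemma hT (t : ℕ) : (t + 1) * ((t + 1) - 1) / 2 = t * (t - 1) / 2 + t := by
  rw [← Nat.choose_two_right, ← Nat.choose_two_right]
  have h := Nat.choose_succ_succ t 1
  rw [Nat.choose_one_right] at h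
  norm_num at h
  omega

lemma qbt {q : ℝ} (hq : 1 < q) (x : ℝ) (j : ℕ) :
    ∑ t ∈ Finset.range (j + 1), qBinom q j t * (-1) ^ t * q ^ (t * (t - 1) / 2) * x ^ t =
      ∏ i ∈ Finset.range j, (1 - x * q ^ i) := by
  induction j with
  | zero => simp [qBinom]
  | succ j ih =>
    rw [Finset.sum_range_succ']
    have key : ∀ t ∈ Finset.range (j + 1),
        qBinom q (j + 1) (t + 1) * (-1) ^ (t + 1) * q ^ ((t + 1) * ((t + 1) - 1) / 2) * x ^ (t + 1)
          = qBinom q j (t + 1) * (-1) ^ (t + 1) * q ^ ((t + 1) * ((t + 1) - 1) / 2) * x ^ (t + 1)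
            + (-(x * q ^ j)) * (qBinom q j t * (-1) ^ t * q ^ (t * (t - 1) / 2) * x ^ t) := by
      intro t ht
      have htj : t ≤ j := by simpa using Nat.lt_succ_iff.mp (Finset.mem_range.mp ht)
      rw [pascal1 hq j t, hT t]
      have hpw : q ^ (j - t) * q ^ t = q ^ j := by
        rw [← pow_add]; congr 1; omega
      linear_combination (-((-1 : ℝ) ^ t * x ^ t * x * q ^ (t * (t - 1) / 2) * qBinom q j t)) * hpw
    rw [Finset.sum_congr rfl key, Finset.sum_add_distrib, ← Finset.mul_sum, ih]
    have hG : ∑ t ∈ Finset.range (j + 1),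
        (qBinom q j (t + 1) * (-1) ^ (t + 1) * q ^ ((t + 1) * ((t + 1) - 1) / 2) * x ^ (t + 1))
        = (∏ i ∈ Finset.range j, (1 - x * q ^ i)) - 1 := by
      have h2 := Finset.sum_range_succ'
        (fun u => qBinom q j u * (-1) ^ u * q ^ (u * (u - 1) / 2) * x ^ u) (j + 1)
      have h3 := Finset.sum_range_succ
        (fun u => qBinom q j u * (-1) ^ u * q ^ (u * (u - 1) / 2) * x ^ u) (j + 1)
      rw [ih] at h3
      simp only [qBinom_of_lt (Nat.lt_succ_self j), zero_mul, add_zero] at h3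
      rw [h3] at h2
      simp only [qBinom_zero_right, pow_zero, mul_one] at h2
      simp only [Nat.add_sub_cancel] at h2 ⊢
      linarith [h2]
    rw [hG, Finset.prod_range_succ]
    simp only [qBinom_zero_right, pow_zero, mul_one]
    norm_num
    ring

lemma qbt2 {q : ℝ} (hq : 1 < q) (x : ℝ) (k : ℕ) :
    ∑ j ∈ Finset.range (k + 1), qBinom q k j * ∏ i ∈ Finset.range j, (x - q ^ i) = x ^ k := by
  induction k with
  | zero => simp [qBinom]
  | succ k ih =>
    rw [Finset.sum_range_succ']
    have key : ∀ j ∈ Finset.range (k + 1),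
        qBinom q (k + 1) (j + 1) * ∏ i ∈ Finset.range (j + 1), (x - q ^ i)
          = q ^ (j + 1) * (qBinom q k (j + 1) * ∏ i ∈ Finset.range (j + 1), (x - q ^ i))
            + (x * (qBinom q k j * ∏ i ∈ Finset.range j, (x - q ^ i))
               - q ^ j * (qBinom q k j * ∏ i ∈ Finset.range j, (x - q ^ i))) := by
      intro j hj
      rw [pascal2 hq k j, Finset.prod_range_succ]
      ring
    rw [Finset.sum_congr rfl key, Finset.sum_add_distrib, Finset.sum_sub_distrib,
      ← Finset.mul_sum, ih]
    have hG : ∑ j ∈ Finset.range (k + 1),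
        q ^ (j + 1) * (qBinom q k (j + 1) * ∏ i ∈ Finset.range (j + 1), (x - q ^ i))
        = (∑ j ∈ Finset.range (k + 1),
            q ^ j * (qBinom q k j * ∏ i ∈ Finset.range j, (x - q ^ i))) - 1 := by
      have h2 := Finset.sum_range_succ'
        (fun u => q ^ u * (qBinom q k u * ∏ i ∈ Finset.range u, (x - q ^ i))) (k + 1)
      have h3 := Finset.sum_range_succ
        (fun u => q ^ u * (qBinom q k u * ∏ i ∈ Finset.range u, (x - q ^ i))) (k + 1)
      simp only [qBinom_of_lt (Nat.lt_succ_self k), zero_mul, mul_zero, add_zero] at h3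
      rw [h3] at h2
      simp only [qBinom_zero_right, pow_zero, one_mul, Finset.prod_range_zero, mul_one] at h2
      linarith
    rw [hG]
    simp only [qBinom_zero_right, pow_zero, one_mul, Finset.prod_range_zero, mul_one]
    ring

lemma qbt_ext {q : ℝ} (hq : 1 < q) (x : ℝ) {j S : ℕ} (hj : j ≤ S) :
    ∑ t ∈ Finset.range (S + 1), qBinom q j t * (-1) ^ t * q ^ (t * (t - 1) / 2) * x ^ t =
      ∏ i ∈ Finset.range j, (1 - x * q ^ i) := by
  rw [← qbt hq x j]
  symm
  apply Finset.sum_subset (Finset.range_subset_range.2 (by omega))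
  intro t ht hnt
  have h : j < t := by
    simp only [Finset.mem_range] at ht hnt
    omega
  rw [qBinom_of_lt h]
  ring

lemma qbt2_ext {q : ℝ} (hq : 1 < q) (x : ℝ) {k S : ℕ} (hk : k ≤ S) :
    ∑ j ∈ Finset.range (S + 1), qBinom q k j * ∏ i ∈ Finset.range j, (x - q ^ i) = x ^ k := by
  rw [← qbt2 hq x k]
  symm
  apply Finset.sum_subset (Finset.range_subset_range.2 (by omega))
  intro t ht hnt
  have h : k < t := by
    simp only [Finset.mem_range] at ht hnt
    omega
  rw [qBinom_of_lt h]
  ring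

end HELPERS

theorem stmt17 (n r s : ℕ) (hn : 0 < n) (hr : 0 < r) (hs : 0 < s) (hdvd : s ∣ r * n)
    (m : ℕ) (hm : m = r * n / s) (q : ℝ) (hq : 1 < q) :
    ∑ j ∈ Finset.range (s + 1), ∑ k ∈ Finset.range (s + 1), ∑ t ∈ Finset.range (s + 1),
        q ^ ((m : ℤ) * j - (m : ℤ) * t + ((s : ℤ) - k) * ((m : ℤ) - n) +
            (((s - k) * (s - k - 1) / 2 : ℕ) : ℤ) + ((t * (t - 1) / 2 : ℕ) : ℤ)) *
          qBinom q s k * qBinom q k j * qBinom q j t * (-1 : ℝ) ^ (t + k) =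
      q ^ (n * r) * (-1 : ℝ) ^ s * qPoch q (q ^ (-(n : ℤ))) s := by
  have hq0 : (0:ℝ) < q := lt_trans zero_lt_one hq
  have hqne : q ≠ 0 := ne_of_gt hq0
  have hms : m * s = n * r := by
    subst hm
    rw [Nat.div_mul_cancel hdvd]
    ring
  set X : ℝ := (q ^ m)⁻¹ with hX
  set Y : ℝ := (q ^ n)⁻¹ with hY
  have hXt : ∀ t : ℕ, q ^ (-(m:ℤ) * t) = X ^ t := by
    intro t
    have h1 : (-(m:ℤ)) * t = -((m * t : ℕ) : ℤ) := by push_cast; ring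
    rw [h1, zpow_neg, zpow_natCast, pow_mul, hX, inv_pow]
  calc
    ∑ j ∈ Finset.range (s + 1), ∑ k ∈ Finset.range (s + 1), ∑ t ∈ Finset.range (s + 1),
        q ^ ((m : ℤ) * j - (m : ℤ) * t + ((s : ℤ) - k) * ((m : ℤ) - n) +
            (((s - k) * (s - k - 1) / 2 : ℕ) : ℤ) + ((t * (t - 1) / 2 : ℕ) : ℤ)) *
          qBinom q s k * qBinom q k j * qBinom q j t * (-1 : ℝ) ^ (t + k)
      = ∑ j ∈ Finset.range (s + 1), ∑ k ∈ Finset.range (s + 1),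
          (q ^ (((s:ℤ) - k) * ((m:ℤ) - n) + (((s - k) * (s - k - 1) / 2 : ℕ) : ℤ)) *
            qBinom q s k * (-1:ℝ) ^ k) *
          (qBinom q k j * ∏ i ∈ Finset.range j, (q ^ m - q ^ i)) := by
        refine Finset.sum_congr rfl fun j hj => Finset.sum_congr rfl fun k hk => ?_
        have hjs : j ≤ s := Nat.lt_succ_iff.mp (Finset.mem_range.mp hj)
        have h1 : ∀ t ∈ Finset.range (s + 1),
            q ^ ((m : ℤ) * j - (m : ℤ) * t + ((s : ℤ) - k) * ((m : ℤ) - n) +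
                (((s - k) * (s - k - 1) / 2 : ℕ) : ℤ) + ((t * (t - 1) / 2 : ℕ) : ℤ)) *
              qBinom q s k * qBinom q k j * qBinom q j t * (-1 : ℝ) ^ (t + k)
            = (q ^ ((m:ℤ) * j) *
                q ^ (((s:ℤ) - k) * ((m:ℤ) - n) + (((s - k) * (s - k - 1) / 2 : ℕ) : ℤ)) *
                qBinom q s k * (-1:ℝ) ^ k * qBinom q k j) *
              (qBinom q j t * (-1:ℝ) ^ t * q ^ (t * (t - 1) / 2) * X ^ t) := by
          intro t ht
          have hE : (m : ℤ) * j - (m : ℤ) * t + ((s : ℤ) - k) * ((m : ℤ) - n) +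
              (((s - k) * (s - k - 1) / 2 : ℕ) : ℤ) + ((t * (t - 1) / 2 : ℕ) : ℤ)
              = ((m:ℤ) * j) +
                (((s:ℤ) - k) * ((m:ℤ) - n) + (((s - k) * (s - k - 1) / 2 : ℕ) : ℤ)) +
                (-(m:ℤ) * t + ((t * (t - 1) / 2 : ℕ) : ℤ)) := by ring
          rw [hE, zpow_add₀ hqne, zpow_add₀ hqne, zpow_add₀ hqne, zpow_add₀ hqne, hXt t,
            zpow_natCast q (t * (t - 1) / 2), pow_add]
          ring
        rw [Finset.sum_congr rfl h1, ← Finset.mul_sum, qbt_ext hq X hjs]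
        have hprod : q ^ ((m:ℤ) * (j:ℤ)) * ∏ i ∈ Finset.range j, (1 - X * q ^ i)
            = ∏ i ∈ Finset.range j, (q ^ m - q ^ i) := by
          have h2 : q ^ ((m:ℤ) * (j:ℤ)) = ∏ _i ∈ Finset.range j, (q ^ m : ℝ) := by
            rw [Finset.prod_const, Finset.card_range, ← pow_mul,
              show ((m:ℤ) * (j:ℤ)) = ((m * j : ℕ) : ℤ) by push_cast; ring, zpow_natCast]
          rw [h2, ← Finset.prod_mul_distrib]
          refine Finset.prod_congr rfl fun i _ => ?_
          rw [hX]
          have : (q:ℝ) ^ m ≠ 0 := pow_ne_zero _ hqne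
          field_simp
        linear_combination
          (q ^ (((s:ℤ) - k) * ((m:ℤ) - n) + (((s - k) * (s - k - 1) / 2 : ℕ) : ℤ)) *
            qBinom q s k * (-1:ℝ) ^ k * qBinom q k j) * hprod
    _ = ∑ k ∈ Finset.range (s + 1),
          (q ^ (((s:ℤ) - k) * ((m:ℤ) - n) + (((s - k) * (s - k - 1) / 2 : ℕ) : ℤ)) *
            qBinom q s k * (-1:ℝ) ^ k) * (q ^ m) ^ k := by
        rw [Finset.sum_comm]
        refine Finset.sum_congr rfl fun k hk => ?_
        rw [← Finset.mul_sum, qbt2_ext hq (q ^ m) (Nat.lt_succ_iff.mp (Finset.mem_range.mp hk))]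
    _ = ∑ l ∈ Finset.range (s + 1), ((q ^ m) ^ s * (-1:ℝ) ^ s) *
          (qBinom q s l * (-1:ℝ) ^ l * q ^ (l * (l - 1) / 2) * Y ^ l) := by
        rw [← Finset.sum_range_reflect]
        refine Finset.sum_congr rfl fun l hl => ?_
        have hls : l ≤ s := Nat.lt_succ_iff.mp (Finset.mem_range.mp hl)
        rw [show s + 1 - 1 - l = s - l from by omega, qBinom_symm hq hls]
        have hBl : ((s:ℤ) - ((s - l : ℕ) : ℤ)) * ((m:ℤ) - n) +
            (((s - (s - l)) * ((s - (s - l)) - 1) / 2 : ℕ) : ℤ)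
            = (l:ℤ) * ((m:ℤ) - n) + ((l * (l - 1) / 2 : ℕ) : ℤ) := by
          rw [show s - (s - l) = l from by omega, Nat.cast_sub hls]
          ring
        rw [hBl]
        have hsgn : ((-1:ℝ)) ^ (s - l) = (-1:ℝ) ^ s * (-1:ℝ) ^ l := by
          have h4 : ((-1:ℝ)) ^ s * (-1:ℝ) ^ l = (-1:ℝ) ^ (s - l) := by
            rw [← pow_add, show s + l = (s - l) + 2 * l from by omega, pow_add, pow_mul]
            try norm_num
          exact h4.symm
        rw [hsgn]
        have hzz : q ^ ((l:ℤ) * ((m:ℤ) - n) + ((l * (l - 1) / 2 : ℕ) : ℤ)) * (q ^ m) ^ (s - l)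
            = (q ^ m) ^ s * q ^ (l * (l - 1) / 2) * Y ^ l := by
          have e1 : ((q:ℝ) ^ m) ^ (s - l) = q ^ (((m * (s - l) : ℕ)) : ℤ) := by
            rw [zpow_natCast, pow_mul]
          have e2 : ((q:ℝ) ^ m) ^ s = q ^ (((m * s : ℕ)) : ℤ) := by
            rw [zpow_natCast, pow_mul]
          have e3 : (q:ℝ) ^ (l * (l - 1) / 2) = q ^ (((l * (l - 1) / 2 : ℕ)) : ℤ) :=
            (zpow_natCast q _).symm
          have e4 : Y ^ l = q ^ (-((n * l : ℕ) : ℤ)) := by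
            rw [hY, zpow_neg, zpow_natCast, pow_mul, inv_pow]
          rw [e1, e2, e3, e4, ← zpow_add₀ hqne, ← zpow_add₀ hqne, ← zpow_add₀ hqne]
          congr 1
          push_cast [Nat.cast_sub hls]
          ring
        linear_combination (qBinom q s l * ((-1:ℝ) ^ s * (-1:ℝ) ^ l)) * hzz
    _ = ((q ^ m) ^ s * (-1:ℝ) ^ s) * ∏ i ∈ Finset.range s, (1 - Y * q ^ i) := by
        rw [← Finset.mul_sum, qbt hq Y s]
    _ = q ^ (n * r) * (-1 : ℝ) ^ s * qPoch q (q ^ (-(n : ℤ))) s := by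
        rw [qPoch, show (q:ℝ) ^ (-(n:ℤ)) = Y from by rw [hY, zpow_neg, zpow_natCast],
          ← pow_mul, hms]
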